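/- arXiv:2002.12613 — 4 statements merged into one kernel-verified Lean document; each statement's English description precedes it below -/
import Mathlib

section
/- Let f, l, u : X × Θ → ℝ with l(x,θ) ≤ f(x,θ) and u(x,θ) − l(x,θ) ≤ 2β·σ(x,θ) pointwise, for some β ≥ 0 and σ : X × Θ → ℝ≥0, where Θ is finite. Given points x_1,…,x_T ∈ X and θ_1,…,θ_T with θ_t ∈ argmax_{θ∈Θ} σ(x_t,θ), we have min_{θ∈Θ} (1/T) Σ_{t=1}^T f(x_t,θ) ≥ min_{θ∈Θ} (1/T) Σ_{t=1}^T u(x_t,θ) − (2β/T) Σ_{t=1}^T σ(x_t,θ_t). -/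
open Finset

theorem Finset.inf'_sub_le_inf' {ι α : Type*} [AddGroup α] [LinearOrder α]
    [AddRightMono α] {s : Finset ι} (hs : s.Nonempty) {g h : ι → α} {c : α}
    (hgh : ∀ i ∈ s, g i - c ≤ h i) : s.inf' hs g - c ≤ s.inf' hs h :=
  le_inf' hs _ fun i hi => (sub_le_sub_right (inf'_le g hi) c).trans (hgh i hi)

theorem ucb_sub_max_width_le {X Θ : Type*} {f l u σ : X → Θ → ℝ} {β : ℝ} (hβ : 0 ≤ β)
    (hl : ∀ x θ, l x θ ≤ f x θ) (hul : ∀ x θ, u x θ - l x θ ≤ 2 * β * σ x θ)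
    {x : X} {θ θ' : Θ} (hθ' : σ x θ ≤ σ x θ') : u x θ - 2 * β * σ x θ' ≤ f x θ := by
  have hwidth : 2 * β * σ x θ ≤ 2 * β * σ x θ' := by gcongr
  linarith [hl x θ, hul x θ]

theorem min_avg_f_ge_min_avg_ucb_minus_general {X Θ : Type} [Fintype Θ] [Nonempty Θ]
    {T : ℕ}
    (f l u σ' : X → Θ → ℝ) (β : ℝ) (hβ : 0 ≤ β)
    (hl : ∀ x θ, l x θ ≤ f x θ)
    (hul : ∀ x θ, u x θ - l x θ ≤ 2 * β * σ' x θ)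
    (xs : Fin T → X) (θs : Fin T → Θ)
    (hθs : ∀ t θ, σ' (xs t) θ ≤ σ' (xs t) (θs t)) :
    univ.inf' univ_nonempty (fun θ => (1 / (T : ℝ)) * ∑ t, u (xs t) θ) -
        (2 * β / (T : ℝ)) * ∑ t, σ' (xs t) (θs t) ≤
      univ.inf' univ_nonempty (fun θ => (1 / (T : ℝ)) * ∑ t, f (xs t) θ) := by
  refine inf'_sub_le_inf' _ fun θ _ => ?_
  calc (1 / (T : ℝ)) * ∑ t, u (xs t) θ - (2 * β / (T : ℝ)) * ∑ t, σ' (xs t) (θs t)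
      = (1 / (T : ℝ)) * ∑ t, (u (xs t) θ - 2 * β * σ' (xs t) (θs t)) := by
        rw [sum_sub_distrib, ← mul_sum]
        ring
    _ ≤ (1 / (T : ℝ)) * ∑ t, f (xs t) θ := by
        gcongr with t
        exact ucb_sub_max_width_le hβ hl hul (hθs t θ)

theorem min_avg_f_ge_min_avg_ucb_minus {X Θ : Type} [Fintype Θ] [Nonempty Θ]
    {T : ℕ} (hT : 0 < T)
    (f l u σ' : X → Θ → ℝ) (β : ℝ) (hβ : 0 ≤ β)
    (hσ : ∀ x θ, 0 ≤ σ' x θ)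
    (hl : ∀ x θ, l x θ ≤ f x θ)
    (hul : ∀ x θ, u x θ - l x θ ≤ 2 * β * σ' x θ)
    (xs : Fin T → X) (θs : Fin T → Θ)
    (hθs : ∀ t θ, σ' (xs t) θ ≤ σ' (xs t) (θs t)) :
    univ.inf' univ_nonempty (fun θ => (1 / (T : ℝ)) * ∑ t, u (xs t) θ) -
        (2 * β / (T : ℝ)) * ∑ t, σ' (xs t) (θs t) ≤
      univ.inf' univ_nonempty (fun θ => (1 / (T : ℝ)) * ∑ t, f (xs t) θ) :=
  min_avg_f_ge_min_avg_ucb_minus_general f l u σ' β hβ hl hul xs θs hθs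
end

section
/- Combining the learner's optimistic best response, the adversary's no-regret guarantee, and valid confidence bounds yields an approximate maximin guarantee: suppose X is finite, Θ = {θ_1,…,θ_m}, f : X × Θ → [0,1], and for each t = 1,…,T there are functions u_t, l_t : X × Θ → [0,1] with l_t ≤ f ≤ u_t pointwise and u_t − l_t ≤ c_t pointwise for constants c_t ≥ 0. Suppose w_1,…,w_T are probability vectors on {1,…,m}, x_t ∈ argmax_{x} Σ_i w_t[i] u_t(x,θ_i), and the regret bound Σ_{t=1}^T Σ_i w_t[i] u_t(x_t,θ_i) − min_{θ∈Θ} Σ_{t=1}^T u_t(x_t,θ) ≤ R holds. Then min_{θ∈Θ} (1/T) Σ_{t=1}^T f(x_t,θ) ≥ max_P min_{θ∈Θ} E_{x∼P}[f(x,θ)] − R/T − (1/T) Σ_{t=1}^T c_t, where the max is over probability distributions P on X. -/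
/-!
Fix a mixed strategy `P` of the learner with value `v = min_θ E_P f(·, θ)`. In every round,
`v` is at most the `w_t`-average of `E_P f`, which optimism (`f ≤ u_t`) and the choice of `x_t`
as best response to `w_t` under `u_t` bound by the learner's optimistic payoff
`∑_θ w_t(θ) u_t(x_t, θ)`. Summing over rounds, the regret bound compares the total optimistic
payoff with `∑_t u_t(x_t, θ)` for every `θ`, and the confidence widths turn this into
`∑_t f(x_t, θ) + ∑_t c_t`. Dividing by `T` and taking the supremum over `P` gives the claim.
-/

open Finset

section ConvexCombination

variable {ι : Type*} [Fintype ι] {w : ι → ℝ}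

lemma inf'_le_sum_mul [Nonempty ι] (hw0 : ∀ i, 0 ≤ w i) (hw1 : ∑ i, w i = 1) (g : ι → ℝ) :
    univ.inf' univ_nonempty g ≤ ∑ i, w i * g i :=
  calc univ.inf' univ_nonempty g = ∑ i, w i * univ.inf' univ_nonempty g := by
        rw [← sum_mul, hw1, one_mul]
    _ ≤ ∑ i, w i * g i :=
        sum_le_sum fun i _ => mul_le_mul_of_nonneg_left (inf'_le _ (mem_univ i)) (hw0 i)

lemma sum_mul_le_of_forall_le (hw0 : ∀ i, 0 ≤ w i) (hw1 : ∑ i, w i = 1) {g : ι → ℝ} {a : ℝ}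
    (hg : ∀ i, g i ≤ a) : ∑ i, w i * g i ≤ a :=
  calc ∑ i, w i * g i ≤ ∑ i, w i * a :=
        sum_le_sum fun i _ => mul_le_mul_of_nonneg_left (hg i) (hw0 i)
    _ = a := by rw [← sum_mul, hw1, one_mul]

lemma exists_nonneg_sum_eq_one (ι : Type*) [Fintype ι] [Nonempty ι] :
    ∃ P : ι → ℝ, (∀ i, 0 ≤ P i) ∧ ∑ i, P i = 1 :=
  ⟨fun _ => 1 / Fintype.card ι, fun _ => by positivity, by simp⟩

end ConvexCombination

lemma inf'_sum_mul_le_of_bestResponse {X Θ : Type*} [Fintype X] [Fintype Θ] [Nonempty Θ]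
    {f u : X → Θ → ℝ} (hfu : ∀ x θ, f x θ ≤ u x θ)
    {w : Θ → ℝ} (hw0 : ∀ θ, 0 ≤ w θ) (hw1 : ∑ θ, w θ = 1)
    {x₀ : X} (hbr : ∀ x, ∑ θ, w θ * u x θ ≤ ∑ θ, w θ * u x₀ θ)
    {P : X → ℝ} (hP0 : ∀ x, 0 ≤ P x) (hP1 : ∑ x, P x = 1) :
    univ.inf' univ_nonempty (fun θ => ∑ x, P x * f x θ) ≤ ∑ θ, w θ * u x₀ θ :=
  calc univ.inf' univ_nonempty (fun θ => ∑ x, P x * f x θ)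
        ≤ ∑ θ, w θ * ∑ x, P x * f x θ := inf'_le_sum_mul hw0 hw1 _
    _ = ∑ x, P x * ∑ θ, w θ * f x θ := by
        simp only [mul_sum, mul_left_comm (w _)]
        exact sum_comm
    _ ≤ ∑ x, P x * ∑ θ, w θ * u x θ := by
        gcongr with x _ θ _
        exacts [hP0 x, hw0 θ, hfu x θ]
    _ ≤ ∑ θ, w θ * u x₀ θ := sum_mul_le_of_forall_le hP0 hP1 hbr

theorem gp_mro_core_guarantee_general {X Θ : Type} [Fintype X] [Fintype Θ]
    [Nonempty X] [Nonempty Θ] {T : ℕ} (hT : 0 < T)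
    (f : X → Θ → ℝ)
    (u l : Fin T → X → Θ → ℝ)
    (hlf : ∀ t x θ, l t x θ ≤ f x θ) (hfu : ∀ t x θ, f x θ ≤ u t x θ)
    (c : Fin T → ℝ)
    (hwidth : ∀ t x θ, u t x θ - l t x θ ≤ c t)
    (w : Fin T → Θ → ℝ) (hw0 : ∀ t θ, 0 ≤ w t θ) (hw1 : ∀ t, ∑ θ, w t θ = 1)
    (xs : Fin T → X)
    (hbr : ∀ t x', ∑ θ, w t θ * u t x' θ ≤ ∑ θ, w t θ * u t (xs t) θ)
    (R : ℝ)
    (hreg : (∑ t, ∑ θ, w t θ * u t (xs t) θ) -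
        univ.inf' univ_nonempty (fun θ => ∑ t, u t (xs t) θ) ≤ R) :
    sSup { v : ℝ | ∃ P : X → ℝ, (∀ x, 0 ≤ P x) ∧ (∑ x, P x) = 1 ∧
        v = univ.inf' univ_nonempty (fun θ => ∑ x, P x * f x θ) }
      - R / (T : ℝ) - (1 / (T : ℝ)) * ∑ t, c t ≤
    univ.inf' univ_nonempty (fun θ => (1 / (T : ℝ)) * ∑ t, f (xs t) θ) := by
  have hTpos : (0 : ℝ) < T := by exact_mod_cast hT
  refine le_inf' _ _ fun θ _ => ?_
  rw [sub_sub, sub_le_iff_le_add]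
  obtain ⟨P₀, hP₀0, hP₀1⟩ := exists_nonneg_sum_eq_one X
  refine csSup_le ⟨_, P₀, hP₀0, hP₀1, rfl⟩ ?_
  rintro _ ⟨P, hP0, hP1, rfl⟩
  have hpayoff : (T : ℝ) * univ.inf' univ_nonempty (fun θ => ∑ x, P x * f x θ) ≤
      ∑ t, ∑ θ, w t θ * u t (xs t) θ := by
    simpa using sum_le_sum fun t (_ : t ∈ univ) =>
      inf'_sum_mul_le_of_bestResponse (hfu t) (hw0 t) (hw1 t) (hbr t) hP0 hP1
  have hmin : univ.inf' univ_nonempty (fun θ => ∑ t, u t (xs t) θ) ≤ ∑ t, u t (xs t) θ :=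
    inf'_le _ (mem_univ θ)
  have hconf : ∑ t, u t (xs t) θ ≤ ∑ t, f (xs t) θ + ∑ t, c t := by
    rw [← sum_add_distrib]
    exact sum_le_sum fun t _ => by linarith [hlf t (xs t) θ, hwidth t (xs t) θ]
  field_simp
  linarith

theorem gp_mro_core_guarantee {X Θ : Type} [Fintype X] [Fintype Θ]
    [Nonempty X] [Nonempty Θ] {T : ℕ} (hT : 0 < T)
    (f : X → Θ → ℝ) (hf0 : ∀ x θ, 0 ≤ f x θ) (hf1 : ∀ x θ, f x θ ≤ 1)
    (u l : Fin T → X → Θ → ℝ)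
    (hu0 : ∀ t x θ, 0 ≤ u t x θ) (hu1 : ∀ t x θ, u t x θ ≤ 1)
    (hl0 : ∀ t x θ, 0 ≤ l t x θ) (hl1 : ∀ t x θ, l t x θ ≤ 1)
    (hlf : ∀ t x θ, l t x θ ≤ f x θ) (hfu : ∀ t x θ, f x θ ≤ u t x θ)
    (c : Fin T → ℝ) (hc : ∀ t, 0 ≤ c t)
    (hwidth : ∀ t x θ, u t x θ - l t x θ ≤ c t)
    (w : Fin T → Θ → ℝ) (hw0 : ∀ t θ, 0 ≤ w t θ) (hw1 : ∀ t, ∑ θ, w t θ = 1)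
    (xs : Fin T → X)
    (hbr : ∀ t x', ∑ θ, w t θ * u t x' θ ≤ ∑ θ, w t θ * u t (xs t) θ)
    (R : ℝ) (hR : 0 ≤ R)
    (hreg : (∑ t, ∑ θ, w t θ * u t (xs t) θ) -
        univ.inf' univ_nonempty (fun θ => ∑ t, u t (xs t) θ) ≤ R) :
    sSup { v : ℝ | ∃ P : X → ℝ, (∀ x, 0 ≤ P x) ∧ (∑ x, P x) = 1 ∧
        v = univ.inf' univ_nonempty (fun θ => ∑ x, P x * f x θ) }
      - R / (T : ℝ) - (1 / (T : ℝ)) * ∑ t, c t ≤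
    univ.inf' univ_nonempty (fun θ => (1 / (T : ℝ)) * ∑ t, f (xs t) θ) :=
  gp_mro_core_guarantee_general hT f u l hlf hfu c hwidth w hw0 hw1 xs hbr R hreg
end

section
/- Sum of posterior standard deviations is bounded via the information gain: let σ_0, σ_1, …, σ_{T−1} be nonnegative reals with σ_{t}^2 ≤ 1 for all t and λ ≥ 1, and define γ_T = (1/2) Σ_{t=1}^T ln(1 + λ^{-1} σ_{t-1}^2). Then Σ_{t=1}^T σ_{t-1} ≤ √(4 T λ γ_T). -/
/-!
Since `λ⁻¹ σ² ≤ 1` and `x ≤ 2 log (1 + x)` on `[0, 1]`, each `σ²` is at most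
`2 λ log (1 + λ⁻¹ σ²)`, so `∑ σ² ≤ 4 λ γ`; Cauchy–Schwarz gives `(∑ σ)² ≤ T ∑ σ²`.
-/

open Finset Real

theorem le_two_mul_log_one_add {x : ℝ} (hx₀ : 0 ≤ x) (hx₁ : x ≤ 1) :
    x ≤ 2 * log (1 + x) := by
  have hlog : 1 - (1 + x)⁻¹ ≤ log (1 + x) := one_sub_inv_le_log_of_pos (by linarith)
  have hinv : 1 - (1 + x)⁻¹ = x / (1 + x) := by field_simp; ring
  have hhalf : x / 2 ≤ x / (1 + x) := div_le_div_of_nonneg_left hx₀ (by linarith) (by linarith)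
  linarith

theorem le_two_mul_mul_log_one_add_inv_mul {s lam : ℝ} (hlam : 0 < lam) (hs₀ : 0 ≤ s)
    (hs : s ≤ lam) : s ≤ 2 * lam * log (1 + lam⁻¹ * s) := by
  have hx₁ : lam⁻¹ * s ≤ 1 := by rwa [inv_mul_le_iff₀ hlam, mul_one]
  have key := le_two_mul_log_one_add (by positivity) hx₁
  calc s = lam * (lam⁻¹ * s) := by field_simp
    _ ≤ lam * (2 * log (1 + lam⁻¹ * s)) := by gcongr
    _ = 2 * lam * log (1 + lam⁻¹ * s) := by ring

theorem sum_sigma_le_sqrt_gamma_general {T : ℕ}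
    (σ' : Fin T → ℝ) (hσ1 : ∀ t, (σ' t) ^ 2 ≤ 1)
    (lam : ℝ) (hlam : 1 ≤ lam)
    (γ : ℝ) (hγ : γ = (1 / 2) * ∑ t, Real.log (1 + lam⁻¹ * (σ' t) ^ 2)) :
    ∑ t, σ' t ≤ Real.sqrt (4 * T * lam * γ) := by
  have hsum_sq : ∑ t, σ' t ^ 2 ≤ 4 * lam * γ :=
    calc ∑ t, σ' t ^ 2 ≤ ∑ t, 2 * lam * log (1 + lam⁻¹ * σ' t ^ 2) :=
          sum_le_sum fun t _ ↦
            le_two_mul_mul_log_one_add_inv_mul (by linarith) (sq_nonneg _) ((hσ1 t).trans hlam)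
      _ = 4 * lam * γ := by rw [← mul_sum, hγ]; ring
  apply le_sqrt_of_sq_le
  calc (∑ t, σ' t) ^ 2 ≤ T * ∑ t, σ' t ^ 2 := by
        simpa using sq_sum_le_card_mul_sum_sq (s := univ) (f := σ')
    _ ≤ T * (4 * lam * γ) := by gcongr
    _ = 4 * T * lam * γ := by ring

theorem sum_sigma_le_sqrt_gamma {T : ℕ} (hT : 0 < T)
    (σ' : Fin T → ℝ) (hσ0 : ∀ t, 0 ≤ σ' t) (hσ1 : ∀ t, (σ' t) ^ 2 ≤ 1)
    (lam : ℝ) (hlam : 1 ≤ lam)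
    (γ : ℝ) (hγ : γ = (1 / 2) * ∑ t, Real.log (1 + lam⁻¹ * (σ' t) ^ 2)) :
    ∑ t, σ' t ≤ Real.sqrt (4 * T * lam * γ) :=
  sum_sigma_le_sqrt_gamma_general σ' hσ1 lam hlam γ hγ
end

section
/- Trade-off objective guarantee (abstract Corollary 2): let X be finite, Θ = {θ_1,…,θ_m}, f : X × Θ → [0,1], Q a probability vector on {1,…,m}, and χ ∈ (0,1]. Define W(P) = (1−χ)·Σ_j Q[j] E_{x∼P}[f(x,θ_j)] + χ·min_{θ∈Θ} E_{x∼P}[f(x,θ)]. Suppose for each t there are u_t, l_t : X × Θ → [0,1] with l_t ≤ f ≤ u_t and u_t − l_t ≤ c_t pointwise (c_t ≥ 0), probability vectors w_t on {1,…,m}, and x_t ∈ argmax_x [ (1−χ) Σ_j Q[j] u_t(x,θ_j) + χ Σ_i w_t[i] u_t(x,θ_i) ], with the adversary regret bound Σ_t Σ_i w_t[i] u_t(x_t,θ_i) − min_θ Σ_t u_t(x_t,θ) ≤ R. Then, letting U be the uniform distribution over x_1,…,x_T, W(U) ≥ max_P W(P) − χR/T − (1/T) Σ_t c_t. -/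
/-!
In each round `u_t` is optimistic, so `W(P)` is at most the objective built from `u_t`; replacing
its minimum over `θ` by the adversary's average `w_t` only increases it, and the result is linear
in `P`, hence at most its value at the best response `x_t`. Summed over the rounds, the
adversary's regret bound turns the `w_t`-averages back into the minimum of the cumulative
optimistic payoffs, which exceed those of `f` by at most `∑ c_t`. Since `W` is positively
homogeneous and commutes with adding constants, dividing by `T` gives the bound for `U`.
-/

open Finset

section ProbabilityWeights

variable {ι : Type*} [Fintype ι] {p g : ι → ℝ}

lemma sum_mul_le_of_forall_le_s11 (hp0 : ∀ i, 0 ≤ p i) (hp1 : ∑ i, p i = 1) {M : ℝ}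
    (hg : ∀ i, g i ≤ M) : ∑ i, p i * g i ≤ M :=
  calc ∑ i, p i * g i ≤ ∑ i, p i * M :=
        sum_le_sum fun i _ => mul_le_mul_of_nonneg_left (hg i) (hp0 i)
    _ = M := by rw [← sum_mul, hp1, one_mul]

lemma le_sum_mul_of_forall_le (hp0 : ∀ i, 0 ≤ p i) (hp1 : ∑ i, p i = 1) {m : ℝ}
    (hg : ∀ i, m ≤ g i) : m ≤ ∑ i, p i * g i :=
  calc m = ∑ i, p i * m := by rw [← sum_mul, hp1, one_mul]
    _ ≤ ∑ i, p i * g i := sum_le_sum fun i _ => mul_le_mul_of_nonneg_left (hg i) (hp0 i)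

end ProbabilityWeights

section TradeoffObjective

variable {Θ : Type*} [Fintype Θ] [Nonempty Θ] {χ : ℝ} {Q F G : Θ → ℝ}

/-- The objective `W` of the paper, as a function of the payoff vector `θ ↦ E_{x∼P}[f(x,θ)]`. -/
noncomputable def tradeoffObjective (χ : ℝ) (Q F : Θ → ℝ) : ℝ :=
  (1 - χ) * ∑ θ, Q θ * F θ + χ * univ.inf' univ_nonempty F

lemma tradeoffObjective_mono (hQ0 : ∀ θ, 0 ≤ Q θ) (hχ0 : 0 ≤ χ) (hχ1 : χ ≤ 1)
    (hFG : ∀ θ, F θ ≤ G θ) : tradeoffObjective χ Q F ≤ tradeoffObjective χ Q G := by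
  have hinf : univ.inf' univ_nonempty F ≤ univ.inf' univ_nonempty G :=
    le_inf' _ _ fun θ _ => (inf'_le F (mem_univ θ)).trans (hFG θ)
  unfold tradeoffObjective
  gcongr with θ
  · exact hQ0 θ
  · exact hFG θ

lemma tradeoffObjective_add_const (hQ1 : ∑ θ, Q θ = 1) (a : ℝ) :
    tradeoffObjective χ Q (fun θ => F θ + a) = tradeoffObjective χ Q F + a := by
  have hinf : univ.inf' univ_nonempty (fun θ => F θ + a) = univ.inf' univ_nonempty F + a :=
    (apply_inf'_eq_inf'_comp _ (· + a) fun x y => (min_add_add_right x y a).symm).symm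
  unfold tradeoffObjective
  rw [hinf]
  simp only [mul_add, sum_add_distrib, ← sum_mul, hQ1]
  ring

lemma tradeoffObjective_const_mul {a : ℝ} (ha : 0 ≤ a) :
    tradeoffObjective χ Q (fun θ => a * F θ) = a * tradeoffObjective χ Q F := by
  have hinf : univ.inf' univ_nonempty (fun θ => a * F θ) = a * univ.inf' univ_nonempty F :=
    (apply_inf'_eq_inf'_comp _ (a * ·) fun x y => mul_min_of_nonneg x y ha).symm
  unfold tradeoffObjective
  rw [hinf]
  simp only [mul_left_comm (Q _), ← mul_sum]
  ring

lemma tradeoffObjective_le_mixture {w : Θ → ℝ} (hχ0 : 0 ≤ χ) (hw0 : ∀ θ, 0 ≤ w θ)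
    (hw1 : ∑ θ, w θ = 1) :
    tradeoffObjective χ Q F ≤ (1 - χ) * ∑ θ, Q θ * F θ + χ * ∑ θ, w θ * F θ := by
  unfold tradeoffObjective
  gcongr
  exact le_sum_mul_of_forall_le hw0 hw1 fun θ => inf'_le F (mem_univ θ)

end TradeoffObjective

lemma sum_mul_sum_comm {X Θ : Type*} [Fintype X] [Fintype Θ] (P : X → ℝ) (q : Θ → ℝ)
    (u : X → Θ → ℝ) : ∑ θ, q θ * ∑ x, P x * u x θ = ∑ x, P x * ∑ θ, q θ * u x θ := by
  simp only [mul_sum, mul_left_comm (q _)]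
  exact sum_comm

section Guarantee

variable {X ι Θ : Type*} [Fintype X] [Fintype ι] [Fintype Θ] [Nonempty Θ] {χ R : ℝ}
  {Q : Θ → ℝ}

lemma tradeoffObjective_le_of_isBestResponse {w : Θ → ℝ} {P : X → ℝ} {f u : X → Θ → ℝ}
    {x₀ : X} (hQ0 : ∀ θ, 0 ≤ Q θ) (hχ0 : 0 ≤ χ) (hχ1 : χ ≤ 1) (hw0 : ∀ θ, 0 ≤ w θ)
    (hw1 : ∑ θ, w θ = 1) (hP0 : ∀ x, 0 ≤ P x) (hP1 : ∑ x, P x = 1)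
    (hfu : ∀ x θ, f x θ ≤ u x θ)
    (hbest : ∀ x, (1 - χ) * ∑ θ, Q θ * u x θ + χ * ∑ θ, w θ * u x θ ≤
      (1 - χ) * ∑ θ, Q θ * u x₀ θ + χ * ∑ θ, w θ * u x₀ θ) :
    tradeoffObjective χ Q (fun θ => ∑ x, P x * f x θ) ≤
      (1 - χ) * ∑ θ, Q θ * u x₀ θ + χ * ∑ θ, w θ * u x₀ θ :=
  calc tradeoffObjective χ Q (fun θ => ∑ x, P x * f x θ)
      ≤ tradeoffObjective χ Q (fun θ => ∑ x, P x * u x θ) :=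
        tradeoffObjective_mono hQ0 hχ0 hχ1 fun θ =>
          sum_le_sum fun x _ => mul_le_mul_of_nonneg_left (hfu x θ) (hP0 x)
    _ ≤ (1 - χ) * ∑ θ, Q θ * ∑ x, P x * u x θ + χ * ∑ θ, w θ * ∑ x, P x * u x θ :=
        tradeoffObjective_le_mixture hχ0 hw0 hw1
    _ = ∑ x, P x * ((1 - χ) * ∑ θ, Q θ * u x θ + χ * ∑ θ, w θ * u x θ) := by
        rw [sum_mul_sum_comm P Q u, sum_mul_sum_comm P w u, mul_sum, mul_sum, ← sum_add_distrib]
        exact sum_congr rfl fun x _ => by ring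
    _ ≤ _ := sum_mul_le_of_forall_le_s11 hP0 hP1 hbest

lemma sum_mixture_le_tradeoffObjective {w v g : ι → Θ → ℝ} {c : ι → ℝ}
    (hQ0 : ∀ θ, 0 ≤ Q θ) (hQ1 : ∑ θ, Q θ = 1) (hχ0 : 0 ≤ χ) (hχ1 : χ ≤ 1)
    (hvg : ∀ t θ, v t θ ≤ g t θ + c t)
    (hreg : (∑ t, ∑ θ, w t θ * v t θ) - univ.inf' univ_nonempty (fun θ => ∑ t, v t θ) ≤ R) :
    ∑ t, ((1 - χ) * ∑ θ, Q θ * v t θ + χ * ∑ θ, w t θ * v t θ) ≤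
      tradeoffObjective χ Q (fun θ => ∑ t, g t θ) + χ * R + ∑ t, c t :=
  calc ∑ t, ((1 - χ) * ∑ θ, Q θ * v t θ + χ * ∑ θ, w t θ * v t θ)
      = tradeoffObjective χ Q (fun θ => ∑ t, v t θ) +
          χ * ((∑ t, ∑ θ, w t θ * v t θ) - univ.inf' univ_nonempty (fun θ => ∑ t, v t θ)) := by
        unfold tradeoffObjective
        rw [sum_add_distrib, ← mul_sum, ← mul_sum, sum_comm]
        simp only [← mul_sum]
        ring
    _ ≤ tradeoffObjective χ Q (fun θ => ∑ t, g t θ + ∑ t, c t) + χ * R := by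
        gcongr
        exact tradeoffObjective_mono hQ0 hχ0 hχ1 fun θ => by
          rw [← sum_add_distrib]
          exact sum_le_sum fun t _ => hvg t θ
    _ = _ := by rw [tradeoffObjective_add_const hQ1]; ring

theorem card_mul_tradeoffObjective_le {w : ι → Θ → ℝ} {f : X → Θ → ℝ} {u : ι → X → Θ → ℝ}
    {c : ι → ℝ} {xs : ι → X} {P : X → ℝ}
    (hQ0 : ∀ θ, 0 ≤ Q θ) (hQ1 : ∑ θ, Q θ = 1) (hχ0 : 0 ≤ χ) (hχ1 : χ ≤ 1)
    (hw0 : ∀ t θ, 0 ≤ w t θ) (hw1 : ∀ t, ∑ θ, w t θ = 1)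
    (hP0 : ∀ x, 0 ≤ P x) (hP1 : ∑ x, P x = 1)
    (hfu : ∀ t x θ, f x θ ≤ u t x θ) (huf : ∀ t x θ, u t x θ ≤ f x θ + c t)
    (hbest : ∀ t x, (1 - χ) * ∑ θ, Q θ * u t x θ + χ * ∑ θ, w t θ * u t x θ ≤
      (1 - χ) * ∑ θ, Q θ * u t (xs t) θ + χ * ∑ θ, w t θ * u t (xs t) θ)
    (hreg : (∑ t, ∑ θ, w t θ * u t (xs t) θ) -
        univ.inf' univ_nonempty (fun θ => ∑ t, u t (xs t) θ) ≤ R) :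
    Fintype.card ι * tradeoffObjective χ Q (fun θ => ∑ x, P x * f x θ) ≤
      tradeoffObjective χ Q (fun θ => ∑ t, f (xs t) θ) + χ * R + ∑ t, c t :=
  calc Fintype.card ι * tradeoffObjective χ Q (fun θ => ∑ x, P x * f x θ)
      = ∑ _t : ι, tradeoffObjective χ Q (fun θ => ∑ x, P x * f x θ) := by
        rw [sum_const, card_univ, nsmul_eq_mul]
    _ ≤ ∑ t, ((1 - χ) * ∑ θ, Q θ * u t (xs t) θ + χ * ∑ θ, w t θ * u t (xs t) θ) :=
        sum_le_sum fun t _ => tradeoffObjective_le_of_isBestResponse hQ0 hχ0 hχ1 (hw0 t)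
          (hw1 t) hP0 hP1 (hfu t) (hbest t)
    _ ≤ _ := sum_mixture_le_tradeoffObjective hQ0 hQ1 hχ0 hχ1 (fun t => huf t (xs t)) hreg

end Guarantee

theorem tradeoff_objective_guarantee_general {X Θ : Type} [Fintype X] [Fintype Θ]
    [Nonempty Θ] {T : ℕ} (hT : 0 < T)
    (f : X → Θ → ℝ)
    (Q : Θ → ℝ) (hQ0 : ∀ θ, 0 ≤ Q θ) (hQ1 : ∑ θ, Q θ = 1)
    (χ : ℝ) (hχ0 : 0 < χ) (hχ1 : χ ≤ 1)
    (u l : Fin T → X → Θ → ℝ)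
    (hlf : ∀ t x θ, l t x θ ≤ f x θ) (hfu : ∀ t x θ, f x θ ≤ u t x θ)
    (c : Fin T → ℝ)
    (hwidth : ∀ t x θ, u t x θ - l t x θ ≤ c t)
    (w : Fin T → Θ → ℝ) (hw0 : ∀ t θ, 0 ≤ w t θ) (hw1 : ∀ t, ∑ θ, w t θ = 1)
    (xs : Fin T → X)
    (hbr : ∀ t x',
      (1 - χ) * ∑ θ, Q θ * u t x' θ + χ * ∑ θ, w t θ * u t x' θ ≤
        (1 - χ) * ∑ θ, Q θ * u t (xs t) θ + χ * ∑ θ, w t θ * u t (xs t) θ)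
    (R : ℝ)
    (hreg : (∑ t, ∑ θ, w t θ * u t (xs t) θ) -
        univ.inf' univ_nonempty (fun θ => ∑ t, u t (xs t) θ) ≤ R) :
    sSup { v : ℝ | ∃ P : X → ℝ, (∀ x, 0 ≤ P x) ∧ (∑ x, P x) = 1 ∧
        v = (1 - χ) * (∑ θ, Q θ * ∑ x, P x * f x θ) +
            χ * univ.inf' univ_nonempty (fun θ => ∑ x, P x * f x θ) }
      - χ * R / (T : ℝ) - (1 / (T : ℝ)) * ∑ t, c t ≤
    (1 - χ) * (∑ θ, Q θ * ((1 / (T : ℝ)) * ∑ t, f (xs t) θ)) +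
      χ * univ.inf' univ_nonempty (fun θ => (1 / (T : ℝ)) * ∑ t, f (xs t) θ) := by
  classical
  have hTpos : (0 : ℝ) < T := by exact_mod_cast hT
  have hpoint : (0 : X → ℝ) ≤ Pi.single (xs ⟨0, hT⟩) 1 := Pi.single_nonneg.2 zero_le_one
  rw [sub_sub, sub_le_iff_le_add]
  refine csSup_le ⟨_, _, hpoint, by simp, rfl⟩ ?_
  rintro _ ⟨P, hP0, hP1, rfl⟩
  have hP := card_mul_tradeoffObjective_le (c := c) hQ0 hQ1 hχ0.le hχ1 hw0 hw1 hP0 hP1 hfu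
    (fun t x θ => by linarith [hlf t x θ, hwidth t x θ]) hbr hreg
  rw [Fintype.card_fin, ← le_div_iff₀' hTpos] at hP
  change tradeoffObjective χ Q _ ≤ tradeoffObjective χ Q (fun θ => 1 / (T : ℝ) * _) + _
  rw [tradeoffObjective_const_mul (one_div_nonneg.2 hTpos.le)]
  exact hP.trans_eq (by ring)

theorem tradeoff_objective_guarantee {X Θ : Type} [Fintype X] [Fintype Θ]
    [Nonempty X] [Nonempty Θ] {T : ℕ} (hT : 0 < T)
    (f : X → Θ → ℝ) (hf0 : ∀ x θ, 0 ≤ f x θ) (hf1 : ∀ x θ, f x θ ≤ 1)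
    (Q : Θ → ℝ) (hQ0 : ∀ θ, 0 ≤ Q θ) (hQ1 : ∑ θ, Q θ = 1)
    (χ : ℝ) (hχ0 : 0 < χ) (hχ1 : χ ≤ 1)
    (u l : Fin T → X → Θ → ℝ)
    (hu0 : ∀ t x θ, 0 ≤ u t x θ) (hu1 : ∀ t x θ, u t x θ ≤ 1)
    (hl0 : ∀ t x θ, 0 ≤ l t x θ) (hl1 : ∀ t x θ, l t x θ ≤ 1)
    (hlf : ∀ t x θ, l t x θ ≤ f x θ) (hfu : ∀ t x θ, f x θ ≤ u t x θ)
    (c : Fin T → ℝ) (hc : ∀ t, 0 ≤ c t)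
    (hwidth : ∀ t x θ, u t x θ - l t x θ ≤ c t)
    (w : Fin T → Θ → ℝ) (hw0 : ∀ t θ, 0 ≤ w t θ) (hw1 : ∀ t, ∑ θ, w t θ = 1)
    (xs : Fin T → X)
    (hbr : ∀ t x',
      (1 - χ) * ∑ θ, Q θ * u t x' θ + χ * ∑ θ, w t θ * u t x' θ ≤
        (1 - χ) * ∑ θ, Q θ * u t (xs t) θ + χ * ∑ θ, w t θ * u t (xs t) θ)
    (R : ℝ) (hR : 0 ≤ R)
    (hreg : (∑ t, ∑ θ, w t θ * u t (xs t) θ) -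
        univ.inf' univ_nonempty (fun θ => ∑ t, u t (xs t) θ) ≤ R) :
    sSup { v : ℝ | ∃ P : X → ℝ, (∀ x, 0 ≤ P x) ∧ (∑ x, P x) = 1 ∧
        v = (1 - χ) * (∑ θ, Q θ * ∑ x, P x * f x θ) +
            χ * univ.inf' univ_nonempty (fun θ => ∑ x, P x * f x θ) }
      - χ * R / (T : ℝ) - (1 / (T : ℝ)) * ∑ t, c t ≤
    (1 - χ) * (∑ θ, Q θ * ((1 / (T : ℝ)) * ∑ t, f (xs t) θ)) +
      χ * univ.inf' univ_nonempty (fun θ => (1 / (T : ℝ)) * ∑ t, f (xs t) θ) :=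
  tradeoff_objective_guarantee_general hT f Q hQ0 hQ1 χ hχ0 hχ1 u l hlf hfu c hwidth w hw0 hw1 xs
    hbr R hreg
end
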